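/- arXiv:1212.1635 — 3 statements merged into one kernel-verified Lean document; each statement's English description precedes it below -/
import Mathlib

section
/- Let (ρ, u) be a smooth (C^∞) solution of the steady isentropic compressible Euler equations on U with ρ > 0 everywhere. Then div(B curl u) = 0 on U, i.e. ∂₁(B w₁) + ∂₂(B w₂) + ∂₃(B w₃) = 0 where w = curl u. -/
open Topology

noncomputable def pd (i : Fin 3) (f : (Fin 3 → ℝ) → ℝ) (x : Fin 3 → ℝ) : ℝ :=
  fderiv ℝ f x (Pi.single i 1)

section helpers
variable {f g : (Fin 3 → ℝ) → ℝ} {x : Fin 3 → ℝ}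

lemma pd_add (hf : DifferentiableAt ℝ f x) (hg : DifferentiableAt ℝ g x) (i : Fin 3) :
    pd i (fun y => f y + g y) x = pd i f x + pd i g x := by
  simp [pd, fderiv_fun_add hf hg]

lemma pd_sub (hf : DifferentiableAt ℝ f x) (hg : DifferentiableAt ℝ g x) (i : Fin 3) :
    pd i (fun y => f y - g y) x = pd i f x - pd i g x := by
  simp [pd, fderiv_fun_sub hf hg]

lemma pd_mul (hf : DifferentiableAt ℝ f x) (hg : DifferentiableAt ℝ g x) (i : Fin 3) :
    pd i (fun y => f y * g y) x = pd i f x * g x + f x * pd i g x := by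
  simp [pd, fderiv_fun_mul hf hg]; ring

lemma pd_div_const (hf : DifferentiableAt ℝ f x) (c : ℝ) (i : Fin 3) :
    pd i (fun y => f y / c) x = pd i f x / c := by
  have : (fun y => f y / c) = fun y => f y * c⁻¹ := by ext y; ring
  rw [this, pd, fderiv_mul_const hf c⁻¹]
  simp [pd]; ring

lemma pd_rpow (hf : DifferentiableAt ℝ f x) (hne : f x ≠ 0) (p : ℝ) (i : Fin 3) :
    pd i (fun y => f y ^ p) x = p * f x ^ (p - 1) * pd i f x := by
  have h := (hf.hasFDerivAt.rpow_const (p := p) (Or.inl hne)).fderiv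
  simp [pd, h]
  try ring

lemma pd_sq (hf : DifferentiableAt ℝ f x) (i : Fin 3) :
    pd i (fun y => f y ^ 2) x = 2 * f x * pd i f x := by
  have : (fun y => f y ^ 2) = fun y => f y * f y := by ext y; ring
  rw [this, pd_mul hf hf]; ring

lemma fderiv_diff_of_contDiffOn {U : Set (Fin 3 → ℝ)} (hU : IsOpen U)
    (hf : ContDiffOn ℝ (⊤ : ℕ∞) f U) (hx : x ∈ U) :
    DifferentiableAt ℝ (fderiv ℝ f) x := by
  have := ((hf.contDiffAt (hU.mem_nhds hx)).fderiv_right (m := 1) (WithTop.coe_le_coe.mpr le_top))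
  exact this.differentiableAt one_ne_zero

lemma diff_pd {U : Set (Fin 3 → ℝ)} (hU : IsOpen U)
    (hf : ContDiffOn ℝ (⊤ : ℕ∞) f U) (hx : x ∈ U) (j : Fin 3) :
    DifferentiableAt ℝ (pd j f) x := by
  have hd := fderiv_diff_of_contDiffOn hU hf hx
  exact ((ContinuousLinearMap.apply ℝ ℝ (Pi.single j 1 : Fin 3 → ℝ)).differentiable.differentiableAt).comp x hd

lemma pd_pd_eq (hd : DifferentiableAt ℝ (fderiv ℝ f) x) (i j : Fin 3) :
    pd i (pd j f) x = fderiv ℝ (fderiv ℝ f) x (Pi.single i 1) (Pi.single j 1) := by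
  have h : HasFDerivAt (fun y => fderiv ℝ f y (Pi.single j 1 : Fin 3 → ℝ))
      ((ContinuousLinearMap.apply ℝ ℝ (Pi.single j 1 : Fin 3 → ℝ)).comp
        (fderiv ℝ (fderiv ℝ f) x)) x :=
    (ContinuousLinearMap.apply ℝ ℝ (Pi.single j 1 : Fin 3 → ℝ)).hasFDerivAt.comp x hd.hasFDerivAt
  show fderiv ℝ (fun y => fderiv ℝ f y (Pi.single j 1)) x (Pi.single i 1) = _
  rw [h.fderiv]
  rfl

lemma pd_comm {U : Set (Fin 3 → ℝ)} (hU : IsOpen U)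
    (hf : ContDiffOn ℝ (⊤ : ℕ∞) f U) (hx : x ∈ U) (i j : Fin 3) :
    pd i (pd j f) x = pd j (pd i f) x := by
  have hev : ∀ᶠ y in 𝓝 x, HasFDerivAt f (fderiv ℝ f y) y := by
    filter_upwards [hU.mem_nhds hx] with y hy
    exact ((hf.differentiableOn (by simp)).differentiableAt (hU.mem_nhds hy)).hasFDerivAt
  have hd := fderiv_diff_of_contDiffOn hU hf hx
  rw [pd_pd_eq hd i j, pd_pd_eq hd j i]
  exact second_derivative_symmetric_of_eventually hev hd.hasFDerivAt _ _
lemma diffAt_div_const {f : (Fin 3 → ℝ) → ℝ} {x : Fin 3 → ℝ}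
    (hf : DifferentiableAt ℝ f x) (c : ℝ) :
    DifferentiableAt ℝ (fun y => f y / c) x := by
  simp only [div_eq_mul_inv]
  exact hf.mul_const c⁻¹

end helpers
noncomputable def curl (u : Fin 3 → (Fin 3 → ℝ) → ℝ) : Fin 3 → (Fin 3 → ℝ) → ℝ :=
  ![fun x => pd 1 (u 2) x - pd 2 (u 1) x,
    fun x => pd 2 (u 0) x - pd 0 (u 2) x,
    fun x => pd 0 (u 1) x - pd 1 (u 0) x]

/-- for a smooth positive-density solution of the steady isentropic
compressible Euler system on an open set `U`, `div (B · curl u) = 0` on `U`. -/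
theorem div_bernoulli_curl_eq_zero
    (U : Set (Fin 3 → ℝ)) (hU : IsOpen U) (γ : ℝ) (hγ1 : 1 < γ) (hγ3 : γ < 3)
    (ρ : (Fin 3 → ℝ) → ℝ) (u : Fin 3 → (Fin 3 → ℝ) → ℝ)
    (hρ : ContDiffOn ℝ (⊤ : ℕ∞) ρ U) (hu : ∀ i, ContDiffOn ℝ (⊤ : ℕ∞) (u i) U)
    (hρpos : ∀ x ∈ U, 0 < ρ x)
    (hmass : ∀ x ∈ U,
      pd 0 (fun y => ρ y * u 0 y) x + pd 1 (fun y => ρ y * u 1 y) x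
        + pd 2 (fun y => ρ y * u 2 y) x = 0)
    (hmom : ∀ i : Fin 3, ∀ x ∈ U,
      pd 0 (fun y => ρ y * u i y * u 0 y) x + pd 1 (fun y => ρ y * u i y * u 1 y) x
        + pd 2 (fun y => ρ y * u i y * u 2 y) x + pd i (fun y => ρ y ^ γ / γ) x = 0)
    (B : (Fin 3 → ℝ) → ℝ)
    (hB : B = fun y => (u 0 y ^ 2 + u 1 y ^ 2 + u 2 y ^ 2) / 2 + ρ y ^ (γ - 1) / (γ - 1)) :
    ∀ x ∈ U,
      pd 0 (fun y => B y * curl u 0 y) x + pd 1 (fun y => B y * curl u 1 y) x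
        + pd 2 (fun y => B y * curl u 2 y) x = 0 := by
  intro x hx
  have hρd : DifferentiableAt ℝ ρ x :=
    (hρ.differentiableOn (by simp)).differentiableAt (hU.mem_nhds hx)
  have hud : ∀ i, DifferentiableAt ℝ (u i) x := fun i =>
    ((hu i).differentiableOn (by simp)).differentiableAt (hU.mem_nhds hx)
  have hR : (0:ℝ) < ρ x := hρpos x hx
  have hRne : ρ x ≠ 0 := ne_of_gt hR
  have hγ1ne : γ - 1 ≠ 0 := sub_ne_zero.mpr (ne_of_gt hγ1)
  have hγne : γ ≠ 0 := by linarith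
  -- expanded mass equation
  have hmassx := hmass x hx
  rw [pd_mul hρd (hud 0) 0, pd_mul hρd (hud 1) 1, pd_mul hρd (hud 2) 2] at hmassx
  -- pressure derivative
  have hpress : ∀ i : Fin 3, pd i (fun y => ρ y ^ γ / γ) x = ρ x ^ (γ - 1) * pd i ρ x := by
    intro i
    have h1 : pd i (fun y => ρ y ^ γ / γ) x = pd i (fun y => ρ y ^ γ) x / γ :=
      pd_div_const (hρd.rpow_const (Or.inl hRne)) γ i
    have h2 : pd i (fun y => ρ y ^ γ) x = γ * ρ x ^ (γ - 1) * pd i ρ x :=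
      pd_rpow hρd hRne γ i
    rw [h1, h2]; field_simp
  -- Euler equations in nonconservative form
  have hpow : ρ x ^ (γ - 1) = ρ x * ρ x ^ (γ - 2) := by
    rw [show γ - 1 = 1 + (γ - 2) by ring, Real.rpow_add hR, Real.rpow_one]
  have HE : ∀ i : Fin 3,
      u 0 x * pd 0 (u i) x + u 1 x * pd 1 (u i) x + u 2 x * pd 2 (u i) x
        + ρ x ^ (γ - 2) * pd i ρ x = 0 := by
    intro i
    have hm := hmom i x hx
    have hρu : DifferentiableAt ℝ (fun y => ρ y * u i y) x := hρd.mul (hud i)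
    have e0 : pd 0 (fun y => ρ y * u i y * u 0 y) x
        = pd 0 (fun y => ρ y * u i y) x * u 0 x + (ρ x * u i x) * pd 0 (u 0) x :=
      pd_mul hρu (hud 0) 0
    have e1 : pd 1 (fun y => ρ y * u i y * u 1 y) x
        = pd 1 (fun y => ρ y * u i y) x * u 1 x + (ρ x * u i x) * pd 1 (u 1) x :=
      pd_mul hρu (hud 1) 1
    have e2 : pd 2 (fun y => ρ y * u i y * u 2 y) x
        = pd 2 (fun y => ρ y * u i y) x * u 2 x + (ρ x * u i x) * pd 2 (u 2) x :=
      pd_mul hρu (hud 2) 2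
    rw [e0, e1, e2, pd_mul hρd (hud i) 0, pd_mul hρd (hud i) 1, pd_mul hρd (hud i) 2,
      hpress i] at hm
    have key : ρ x * (u 0 x * pd 0 (u i) x + u 1 x * pd 1 (u i) x + u 2 x * pd 2 (u i) x
        + ρ x ^ (γ - 2) * pd i ρ x) = 0 := by
      linear_combination hm - u i x * hmassx - pd i ρ x * hpow
    exact (mul_eq_zero.mp key).resolve_left hRne
  -- derivative of B
  have hBrpow : DifferentiableAt ℝ (fun y => ρ y ^ (γ - 1)) x := hρd.rpow_const (Or.inl hRne)
  have hsq : DifferentiableAt ℝ (fun y => u 0 y ^ 2 + u 1 y ^ 2 + u 2 y ^ 2) x :=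
    (((hud 0).pow 2).add ((hud 1).pow 2)).add ((hud 2).pow 2)
  have hBd : DifferentiableAt ℝ B x := by
    rw [hB]; exact (diffAt_div_const hsq 2).add (diffAt_div_const hBrpow (γ - 1))
  have hpdB : ∀ j : Fin 3, pd j B x
      = u 0 x * pd j (u 0) x + u 1 x * pd j (u 1) x + u 2 x * pd j (u 2) x
        + ρ x ^ (γ - 2) * pd j ρ x := by
    intro j
    rw [hB]
    have h1 : pd j (fun y => (u 0 y ^ 2 + u 1 y ^ 2 + u 2 y ^ 2) / 2
          + ρ y ^ (γ - 1) / (γ - 1)) x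
        = pd j (fun y => (u 0 y ^ 2 + u 1 y ^ 2 + u 2 y ^ 2) / 2) x
          + pd j (fun y => ρ y ^ (γ - 1) / (γ - 1)) x :=
      pd_add (diffAt_div_const hsq 2) (diffAt_div_const hBrpow (γ - 1)) j
    have h2 : pd j (fun y => (u 0 y ^ 2 + u 1 y ^ 2 + u 2 y ^ 2) / 2) x
        = pd j (fun y => u 0 y ^ 2 + u 1 y ^ 2 + u 2 y ^ 2) x / 2 :=
      pd_div_const hsq 2 j
    have h3 : pd j (fun y => u 0 y ^ 2 + u 1 y ^ 2 + u 2 y ^ 2) x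
        = pd j (fun y => u 0 y ^ 2 + u 1 y ^ 2) x + pd j (fun y => u 2 y ^ 2) x :=
      pd_add (((hud 0).pow 2).add ((hud 1).pow 2)) ((hud 2).pow 2) j
    have h4 : pd j (fun y => u 0 y ^ 2 + u 1 y ^ 2) x
        = pd j (fun y => u 0 y ^ 2) x + pd j (fun y => u 1 y ^ 2) x :=
      pd_add ((hud 0).pow 2) ((hud 1).pow 2) j
    have h5 : pd j (fun y => ρ y ^ (γ - 1) / (γ - 1)) x
        = pd j (fun y => ρ y ^ (γ - 1)) x / (γ - 1) :=
      pd_div_const hBrpow (γ - 1) j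
    have h6 : pd j (fun y => ρ y ^ (γ - 1)) x = (γ - 1) * ρ x ^ (γ - 1 - 1) * pd j ρ x :=
      pd_rpow hρd hRne (γ - 1) j
    rw [h1, h2, h3, h4, h5, h6, pd_sq (hud 0) j, pd_sq (hud 1) j, pd_sq (hud 2) j,
      show γ - 1 - 1 = γ - 2 by ring]
    field_simp
  -- differentiability of curl components
  have hw0d : DifferentiableAt ℝ (fun y => pd 1 (u 2) y - pd 2 (u 1) y) x :=
    (diff_pd hU (hu 2) hx 1).sub (diff_pd hU (hu 1) hx 2)
  have hw1d : DifferentiableAt ℝ (fun y => pd 2 (u 0) y - pd 0 (u 2) y) x :=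
    (diff_pd hU (hu 0) hx 2).sub (diff_pd hU (hu 2) hx 0)
  have hw2d : DifferentiableAt ℝ (fun y => pd 0 (u 1) y - pd 1 (u 0) y) x :=
    (diff_pd hU (hu 1) hx 0).sub (diff_pd hU (hu 0) hx 1)
  -- expand the goal
  simp only [curl, Matrix.cons_val_zero, Matrix.cons_val_one, Matrix.head_cons,
    Matrix.cons_val_two, Matrix.tail_cons]
  have g0 : pd 0 (fun y => B y * (pd 1 (u 2) y - pd 2 (u 1) y)) x
      = pd 0 B x * (pd 1 (u 2) x - pd 2 (u 1) x)
        + B x * pd 0 (fun y => pd 1 (u 2) y - pd 2 (u 1) y) x := pd_mul hBd hw0d 0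
  have g1 : pd 1 (fun y => B y * (pd 2 (u 0) y - pd 0 (u 2) y)) x
      = pd 1 B x * (pd 2 (u 0) x - pd 0 (u 2) x)
        + B x * pd 1 (fun y => pd 2 (u 0) y - pd 0 (u 2) y) x := pd_mul hBd hw1d 1
  have g2 : pd 2 (fun y => B y * (pd 0 (u 1) y - pd 1 (u 0) y)) x
      = pd 2 B x * (pd 0 (u 1) x - pd 1 (u 0) x)
        + B x * pd 2 (fun y => pd 0 (u 1) y - pd 1 (u 0) y) x := pd_mul hBd hw2d 2
  have s0 : pd 0 (fun y => pd 1 (u 2) y - pd 2 (u 1) y) x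
      = pd 0 (pd 1 (u 2)) x - pd 0 (pd 2 (u 1)) x :=
    pd_sub (diff_pd hU (hu 2) hx 1) (diff_pd hU (hu 1) hx 2) 0
  have s1 : pd 1 (fun y => pd 2 (u 0) y - pd 0 (u 2) y) x
      = pd 1 (pd 2 (u 0)) x - pd 1 (pd 0 (u 2)) x :=
    pd_sub (diff_pd hU (hu 0) hx 2) (diff_pd hU (hu 2) hx 0) 1
  have s2 : pd 2 (fun y => pd 0 (u 1) y - pd 1 (u 0) y) x
      = pd 2 (pd 0 (u 1)) x - pd 2 (pd 1 (u 0)) x :=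
    pd_sub (diff_pd hU (hu 1) hx 0) (diff_pd hU (hu 0) hx 1) 2
  have c1 : pd 0 (pd 1 (u 2)) x = pd 1 (pd 0 (u 2)) x := pd_comm hU (hu 2) hx 0 1
  have c2 : pd 0 (pd 2 (u 1)) x = pd 2 (pd 0 (u 1)) x := pd_comm hU (hu 1) hx 0 2
  have c3 : pd 1 (pd 2 (u 0)) x = pd 2 (pd 1 (u 0)) x := pd_comm hU (hu 0) hx 1 2
  rw [g0, g1, g2, s0, s1, s2, hpdB 0, hpdB 1, hpdB 2]
  linear_combination (pd 1 (u 2) x - pd 2 (u 1) x) * HE 0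
    + (pd 2 (u 0) x - pd 0 (u 2) x) * HE 1
    + (pd 0 (u 1) x - pd 1 (u 0) x) * HE 2
    + B x * c1 - B x * c2 + B x * c3
end

section
/- (Theorem 3.5, first conservation law.) Let (ρ, u) be a smooth (C^∞) solution of the steady isentropic compressible Euler equations on U with ρ > 0, u₁ > 0 and |u| ≥ δ for some constant δ > 0, and suppose the Bernoulli function B is equal to a constant B₀ on U. Define K₁ = G^{-1/2}, K₂ = β₂K₁, K₃ = β₃K₁, I(r) = exp(∫₀^r t^{γ-2}/(2(B₀ − h(t))) dt) for 0 ≤ r ≤ sup ρ, and A_i = K_i/I(ρ) for i = 1,2,3 (the integrals converge since γ > 1 and B₀ − h(t) ≥ δ²/2 > 0 for t ∈ [0, ρ(x)]). Then div(ρA) = 0 on U, i.e. ∂₁(ρA₁) + ∂₂(ρA₂) + ∂₃(ρA₃) = 0. -/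
/-- `I(r) = exp(∫₀^r t^(γ-2)/(2(B₀ − h(t))) dt)` with `h(t) = t^(γ-1)/(γ-1)`. -/
noncomputable def Ifun (γ B₀ r : ℝ) : ℝ :=
  Real.exp (∫ t in (0:ℝ)..r, t ^ (γ - 2) / (2 * (B₀ - t ^ (γ - 1) / (γ - 1))))

lemma Ifun_hasDerivAt (γ B₀ b Sx : ℝ) (hγ1 : 1 < γ) (hb : 0 < b) (hSx : 0 < Sx)
    (hden : B₀ - b ^ (γ - 1) / (γ - 1) = Sx / 2) :
    HasDerivAt (Ifun γ B₀) (Ifun γ B₀ b * (b ^ (γ - 2) / Sx)) b := by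
  have hγ1' : (0:ℝ) < γ - 1 := by linarith
  set g : ℝ → ℝ := fun t => t ^ (γ - 2) / (2 * (B₀ - t ^ (γ - 1) / (γ - 1))) with hg
  have hcontpow : Continuous fun t : ℝ => t ^ (γ - 1) :=
    Real.continuous_rpow_const (by linarith)
  have hcontden : Continuous fun t : ℝ => 2 * (B₀ - t ^ (γ - 1) / (γ - 1)) :=
    continuous_const.mul (continuous_const.sub (hcontpow.div_const _))
  have hdenpos : ∀ t ∈ Set.uIcc (0:ℝ) b, 0 < B₀ - t ^ (γ - 1) / (γ - 1) := by
    intro t ht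
    rw [Set.uIcc_of_le hb.le] at ht
    have h1 : t ^ (γ - 1) ≤ b ^ (γ - 1) := Real.rpow_le_rpow ht.1 ht.2 (by linarith)
    have h2 : t ^ (γ - 1) / (γ - 1) ≤ b ^ (γ - 1) / (γ - 1) := by gcongr
    nlinarith
  have hint : IntervalIntegrable g MeasureTheory.volume 0 b := by
    have h1 : IntervalIntegrable (fun t : ℝ => t ^ (γ - 2)) MeasureTheory.volume 0 b :=
      intervalIntegral.intervalIntegrable_rpow' (by linarith)
    have h2 : ContinuousOn (fun t : ℝ => (2 * (B₀ - t ^ (γ - 1) / (γ - 1)))⁻¹)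
        (Set.uIcc (0:ℝ) b) := by
      apply ContinuousOn.inv₀ hcontden.continuousOn
      intro t ht
      have := hdenpos t ht
      positivity
    simpa [hg, div_eq_mul_inv] using h1.mul_continuousOn h2
  set V : Set ℝ := Set.Ioi (0:ℝ) ∩ {t | 2 * (B₀ - t ^ (γ - 1) / (γ - 1)) ≠ 0} with hV
  have hVopen : IsOpen V :=
    isOpen_Ioi.inter (isOpen_compl_singleton.preimage hcontden)
  have hgc : ∀ t ∈ V, ContinuousAt g t := by
    intro t ht
    exact ContinuousAt.div
      (Real.continuousAt_rpow_const t _ (Or.inl (ne_of_gt ht.1)))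
      hcontden.continuousAt ht.2
  have hbV : b ∈ V := by
    refine ⟨hb, ?_⟩
    have : 0 < B₀ - b ^ (γ - 1) / (γ - 1) := hdenpos b Set.right_mem_uIcc
    simp only [Set.mem_setOf_eq]
    positivity
  have hmeas := ContinuousAt.stronglyMeasurableAtFilter (μ := MeasureTheory.volume)
    hVopen hgc b hbV
  have hI : HasDerivAt (fun r => ∫ t in (0:ℝ)..r, g t) (g b) b :=
    intervalIntegral.integral_hasDerivAt_right hint hmeas (hgc b hbV)
  have hgb : g b = b ^ (γ - 2) / Sx := by
    rw [hg]; simp only; rw [hden]; ring_nf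
  have := hI.exp
  rw [hgb] at this
  exact this

set_option maxHeartbeats 1000000 in
/-- Theorem 3.5, first conservation law: `div(ρA) = 0` where
`A = K/I(ρ)`, `K₁ = G^(-1/2)`, `K₂ = β₂K₁`, `K₃ = β₃K₁`. -/
theorem new_mass_conservation_law
    (U : Set (Fin 3 → ℝ)) (hU : IsOpen U) (γ : ℝ) (hγ1 : 1 < γ) (hγ3 : γ < 3)
    (ρ : (Fin 3 → ℝ) → ℝ) (u : Fin 3 → (Fin 3 → ℝ) → ℝ)
    (hρ : ContDiffOn ℝ (⊤ : ℕ∞) ρ U) (hu : ∀ i, ContDiffOn ℝ (⊤ : ℕ∞) (u i) U)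
    (hρpos : ∀ x ∈ U, 0 < ρ x) (hu1pos : ∀ x ∈ U, 0 < u 0 x)
    (δ : ℝ) (hδ : 0 < δ)
    (hspeed : ∀ x ∈ U, δ ≤ Real.sqrt (u 0 x ^ 2 + u 1 x ^ 2 + u 2 x ^ 2))
    (hmass : ∀ x ∈ U,
      pd 0 (fun y => ρ y * u 0 y) x + pd 1 (fun y => ρ y * u 1 y) x
        + pd 2 (fun y => ρ y * u 2 y) x = 0)
    (hmom : ∀ i : Fin 3, ∀ x ∈ U,
      pd 0 (fun y => ρ y * u i y * u 0 y) x + pd 1 (fun y => ρ y * u i y * u 1 y) x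
        + pd 2 (fun y => ρ y * u i y * u 2 y) x + pd i (fun y => ρ y ^ γ / γ) x = 0)
    (B₀ : ℝ)
    (hBconst : ∀ x ∈ U,
      (u 0 x ^ 2 + u 1 x ^ 2 + u 2 x ^ 2) / 2 + ρ x ^ (γ - 1) / (γ - 1) = B₀)
    (β₂ β₃ G K₁ K₂ K₃ : (Fin 3 → ℝ) → ℝ)
    (hβ₂ : β₂ = fun y => u 1 y / u 0 y) (hβ₃ : β₃ = fun y => u 2 y / u 0 y)
    (hG : G = fun y => 1 + β₂ y ^ 2 + β₃ y ^ 2)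
    (hK₁ : K₁ = fun y => (Real.sqrt (G y))⁻¹)
    (hK₂ : K₂ = fun y => β₂ y * K₁ y) (hK₃ : K₃ = fun y => β₃ y * K₁ y) :
    ∀ x ∈ U,
      pd 0 (fun y => ρ y * (K₁ y / Ifun γ B₀ (ρ y))) x
        + pd 1 (fun y => ρ y * (K₂ y / Ifun γ B₀ (ρ y))) x
        + pd 2 (fun y => ρ y * (K₃ y / Ifun γ B₀ (ρ y))) x = 0 := by
  intro x hx
  have hxU : U ∈ nhds x := hU.mem_nhds hx
  have hρx : 0 < ρ x := hρpos x hx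
  have hγ1' : (0:ℝ) < γ - 1 := by linarith
  -- derivatives of ρ and u
  have hρd : HasFDerivAt ρ (fderiv ℝ ρ x) x :=
    ((hρ.contDiffAt hxU).differentiableAt (by simp)).hasFDerivAt
  have hud : ∀ i, HasFDerivAt (u i) (fderiv ℝ (u i) x) x := fun i =>
    (((hu i).contDiffAt hxU).differentiableAt (by simp)).hasFDerivAt
  set Dρ := fderiv ℝ ρ x with hDρ
  -- the speed squared
  set Sm : (Fin 3 → ℝ) → ℝ :=
    fun y => u 0 y * u 0 y + u 1 y * u 1 y + u 2 y * u 2 y with hSm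
  have hSmpos : ∀ y ∈ U, 0 < Sm y := by
    intro y hy
    have := hu1pos y hy
    simp only [hSm]
    nlinarith [mul_self_nonneg (u 1 y), mul_self_nonneg (u 2 y)]
  have hSx : 0 < Sm x := hSmpos x hx
  set q : (Fin 3 → ℝ) → ℝ := fun y => Real.sqrt (Sm y) with hqdef
  have hqpos : ∀ y ∈ U, 0 < q y := fun y hy => Real.sqrt_pos.mpr (hSmpos y hy)
  have hqx : 0 < q x := hqpos x hx
  have hqsq : q x ^ 2 = Sm x := Real.sq_sqrt hSx.le
  -- derivative of Sm
  set DS := (u 0 x • fderiv ℝ (u 0) x + u 0 x • fderiv ℝ (u 0) x)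
      + (u 1 x • fderiv ℝ (u 1) x + u 1 x • fderiv ℝ (u 1) x)
      + (u 2 x • fderiv ℝ (u 2) x + u 2 x • fderiv ℝ (u 2) x) with hDSdef
  have hSd : HasFDerivAt Sm DS x :=
    (((hud 0).mul (hud 0)).add ((hud 1).mul (hud 1))).add ((hud 2).mul (hud 2))
  -- derivative of ρ^(γ-1)
  have hpd : HasFDerivAt (fun y => ρ y ^ (γ - 1)) (((γ - 1) * ρ x ^ (γ - 1 - 1)) • Dρ) x :=
    (Real.hasDerivAt_rpow_const (p := γ - 1) (Or.inl hρx.ne')).comp_hasFDerivAt x hρd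
  -- Bernoulli constant gives a relation for DS
  have hBd : HasFDerivAt (fun y => (2:ℝ)⁻¹ * Sm y + (γ - 1)⁻¹ * ρ y ^ (γ - 1))
      ((2:ℝ)⁻¹ • DS + (γ - 1)⁻¹ • (((γ - 1) * ρ x ^ (γ - 1 - 1)) • Dρ)) x :=
    (hSd.const_mul _).add (hpd.const_mul _)
  have hEv : (fun y => (2:ℝ)⁻¹ * Sm y + (γ - 1)⁻¹ * ρ y ^ (γ - 1))
      =ᶠ[nhds x] fun _ => B₀ := by
    refine Filter.eventuallyEq_of_mem hxU fun y hy => ?_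
    have := hBconst y hy
    simp only [hSm]
    rw [← this]; ring
  have hB0 : HasFDerivAt (fun y => (2:ℝ)⁻¹ * Sm y + (γ - 1)⁻¹ * ρ y ^ (γ - 1))
      (0 : (Fin 3 → ℝ) →L[ℝ] ℝ) x :=
    (hasFDerivAt_const B₀ x).congr_of_eventuallyEq hEv
  have hkey := hBd.unique hB0
  have hDSv : ∀ v, DS v = -(2 * ρ x ^ (γ - 2)) * Dρ v := by
    intro v
    have h2 := congrArg (fun L : (Fin 3 → ℝ) →L[ℝ] ℝ => L v) hkey
    simp only [ContinuousLinearMap.add_apply, ContinuousLinearMap.coe_smul',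
      Pi.smul_apply, ContinuousLinearMap.zero_apply, smul_eq_mul] at h2
    have h3 : γ - 1 - 1 = γ - 2 := by ring
    rw [h3] at h2
    have hne : γ - 1 ≠ 0 := ne_of_gt hγ1'
    have h4 : (γ - 1)⁻¹ * ((γ - 1) * ρ x ^ (γ - 2) * Dρ v)
        = ρ x ^ (γ - 2) * Dρ v := by
      field_simp
    linarith
  -- derivative of J = Ifun ∘ ρ
  set J : (Fin 3 → ℝ) → ℝ := fun y => Ifun γ B₀ (ρ y) with hJdef
  have hden : B₀ - ρ x ^ (γ - 1) / (γ - 1) = Sm x / 2 := by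
    have := hBconst x hx
    simp only [hSm]
    have e : u 0 x ^ 2 + u 1 x ^ 2 + u 2 x ^ 2
        = u 0 x * u 0 x + u 1 x * u 1 x + u 2 x * u 2 x := by ring
    linarith
  have hJd : HasFDerivAt J ((Ifun γ B₀ (ρ x) * (ρ x ^ (γ - 2) / Sm x)) • Dρ) x :=
    (Ifun_hasDerivAt γ B₀ (ρ x) (Sm x) hγ1 hρx hSx hden).comp_hasFDerivAt x hρd
  -- derivative of q
  have hqd : HasFDerivAt q ((1 / (2 * q x)) • DS) x :=
    (Real.hasDerivAt_sqrt hSx.ne').comp_hasFDerivAt x hSd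
  -- P = q * J has zero derivative
  set P : (Fin 3 → ℝ) → ℝ := fun y => q y * J y with hPdef
  have hJxpos : 0 < J x := Real.exp_pos _
  have hPd : HasFDerivAt P
      (q x • ((Ifun γ B₀ (ρ x) * (ρ x ^ (γ - 2) / Sm x)) • Dρ)
        + J x • ((1 / (2 * q x)) • DS)) x := hqd.mul hJd
  have hDP0 : (q x • ((Ifun γ B₀ (ρ x) * (ρ x ^ (γ - 2) / Sm x)) • Dρ)
        + J x • ((1 / (2 * q x)) • DS)) = 0 := by
    ext v
    simp only [ContinuousLinearMap.add_apply, ContinuousLinearMap.coe_smul',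
      Pi.smul_apply, ContinuousLinearMap.zero_apply, smul_eq_mul]
    rw [hDSv v, ← hqsq]
    have hJx : J x = Ifun γ B₀ (ρ x) := rfl
    field_simp
    ring
  have hPd0 : HasFDerivAt P (0 : (Fin 3 → ℝ) →L[ℝ] ℝ) x := by
    rw [hDP0] at hPd; exact hPd
  have hPx : 0 < P x := mul_pos hqx hJxpos
  have hFd : HasFDerivAt (fun y => (P y)⁻¹) (0 : (Fin 3 → ℝ) →L[ℝ] ℝ) x := by
    have := (hasDerivAt_inv hPx.ne').comp_hasFDerivAt x hPd0
    simpa [Function.comp_def] using this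
  -- derivatives of the three candidate functions
  have hT : ∀ i, HasFDerivAt (fun y => ρ y * u i y * (P y)⁻¹)
      ((ρ x * u i x) • (0 : (Fin 3 → ℝ) →L[ℝ] ℝ)
        + (P x)⁻¹ • (ρ x • fderiv ℝ (u i) x + u i x • Dρ)) x :=
    fun i => (hρd.mul (hud i)).mul hFd
  -- the original functions agree with the candidates on U
  have hKval : ∀ y ∈ U, Real.sqrt (G y) = q y / u 0 y := by
    intro y hy
    have hu0y := hu1pos y hy
    have hqy := hqpos y hy
    have hq2 : q y ^ 2 = Sm y := Real.sq_sqrt (hSmpos y hy).le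
    have hGy : G y = (q y / u 0 y) ^ 2 := by
      rw [hG, hβ₂, hβ₃]
      simp only
      rw [div_pow, div_pow, div_pow, hq2, hSm]
      field_simp
    rw [hGy, Real.sqrt_sq (by positivity)]
  have hJypos : ∀ y, 0 < Ifun γ B₀ (ρ y) := fun y => Real.exp_pos _
  have hE0 : ∀ y ∈ U, ρ y * (K₁ y / Ifun γ B₀ (ρ y)) = ρ y * u 0 y * (P y)⁻¹ := by
    intro y hy
    have hu0y := hu1pos y hy
    have hqy := hqpos y hy
    have hJy := hJypos y
    rw [hK₁]
    simp only [hPdef, hJdef]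
    rw [hKval y hy]
    field_simp
  have hE1 : ∀ y ∈ U, ρ y * (K₂ y / Ifun γ B₀ (ρ y)) = ρ y * u 1 y * (P y)⁻¹ := by
    intro y hy
    have hu0y := hu1pos y hy
    have hqy := hqpos y hy
    have hJy := hJypos y
    rw [hK₂, hK₁, hβ₂]
    simp only [hPdef, hJdef]
    rw [hKval y hy]
    field_simp
  have hE2 : ∀ y ∈ U, ρ y * (K₃ y / Ifun γ B₀ (ρ y)) = ρ y * u 2 y * (P y)⁻¹ := by
    intro y hy
    have hu0y := hu1pos y hy
    have hqy := hqpos y hy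
    have hJy := hJypos y
    rw [hK₃, hK₁, hβ₃]
    simp only [hPdef, hJdef]
    rw [hKval y hy]
    field_simp
  -- compute the three partial derivatives
  have key : ∀ (i : Fin 3) (f : (Fin 3 → ℝ) → ℝ),
      (∀ y ∈ U, f y = ρ y * u i y * (P y)⁻¹) →
      pd i f x = (P x)⁻¹ * pd i (fun y => ρ y * u i y) x := by
    intro i f hf
    have hEvf : f =ᶠ[nhds x] fun y => ρ y * u i y * (P y)⁻¹ :=
      Filter.eventuallyEq_of_mem hxU hf
    unfold pd
    rw [hEvf.fderiv_eq, (hT i).fderiv, (show HasFDerivAt (fun y => ρ y * u i y) _ x from hρd.mul (hud i)).fderiv]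
    simp only [ContinuousLinearMap.add_apply, ContinuousLinearMap.coe_smul',
      Pi.smul_apply, ContinuousLinearMap.zero_apply, smul_eq_mul]
    ring
  rw [key 0 _ hE0, key 1 _ hE1, key 2 _ hE2, ← mul_add, ← mul_add, hmass x hx, mul_zero]
end

section
/- (Theorem 3.5, momentum-type conservation laws.) Let (ρ, u) be a smooth (C^∞) solution of the steady isentropic compressible Euler equations on U with ρ > 0, u₁ > 0 and |u| ≥ δ for some constant δ > 0, and suppose the Bernoulli function B is equal to a constant B₀ on U. Define K₁ = G^{-1/2}, K₂ = β₂K₁, K₃ = β₃K₁, I(r) = exp(∫₀^r t^{γ-2}/(2(B₀ − h(t))) dt), Q(r) = ∫₀^r t^{γ-1} I(t)^{-2}/(2(B₀ − h(t))) dt, and A_i = K_i/I(ρ) for i = 1,2,3. Then on U: ∂₁(ρA₁²) + ∂₂(ρA₁A₂) + ∂₃(ρA₁A₃) + ∂₁(Q(ρ)) = 0, ∂₁(ρA₁A₂) + ∂₂(ρA₂²) + ∂₃(ρA₂A₃) + ∂₂(Q(ρ)) = 0, and ∂₁(ρA₁A₃) + ∂₂(ρA₂A₃) + ∂₃(ρA₃²)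 + ∂₃(Q(ρ)) = 0. -/
/-- `Q(r) = ∫₀^r t^(γ-1) I(t)⁻² /(2(B₀ − h(t))) dt`. -/
noncomputable def Qfun (γ B₀ r : ℝ) : ℝ :=
  ∫ t in (0:ℝ)..r, t ^ (γ - 1) * (Ifun γ B₀ t ^ 2)⁻¹ / (2 * (B₀ - t ^ (γ - 1) / (γ - 1)))

section aux

variable {γ B₀ δ r : ℝ}

lemma aux_integral_phi (hγ1 : 1 < γ) (hγ3 : γ < 3) (hδ : 0 < δ) (hr : 0 < r)
    (hB : ∀ t ∈ Set.Icc (0:ℝ) r, δ ^ 2 / 2 ≤ B₀ - t ^ (γ - 1) / (γ - 1)) :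
    (∫ t in (0:ℝ)..r, t ^ (γ - 2) / (2 * (B₀ - t ^ (γ - 1) / (γ - 1))))
      = (Real.log B₀ - Real.log (B₀ - r ^ (γ - 1) / (γ - 1))) / 2 := by
  have hδ2 : 0 < δ ^ 2 / 2 := by positivity
  have hpos : ∀ t ∈ Set.Icc (0:ℝ) r, 0 < B₀ - t ^ (γ - 1) / (γ - 1) :=
    fun t ht => lt_of_lt_of_le hδ2 (hB t ht)
  have hB0 : 0 < B₀ := by
    have h0 := hpos 0 ⟨le_refl 0, hr.le⟩
    rwa [Real.zero_rpow (by linarith : γ - 1 ≠ 0), zero_div, sub_zero] at h0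
  have hcont_inner : Continuous fun t : ℝ => B₀ - t ^ (γ - 1) / (γ - 1) :=
    continuous_const.sub ((Real.continuous_rpow_const (by linarith)).div_const _)
  set F : ℝ → ℝ := fun t => -(Real.log (B₀ - t ^ (γ - 1) / (γ - 1))) / 2 with hF
  have hFcont : ContinuousOn F (Set.Icc 0 r) := by
    apply ContinuousOn.div_const
    apply ContinuousOn.neg
    exact ContinuousOn.log hcont_inner.continuousOn (fun t ht => (hpos t ht).ne')
  have hderiv : ∀ t ∈ Set.Ioo (0:ℝ) r,
      HasDerivAt F (t ^ (γ - 2) / (2 * (B₀ - t ^ (γ - 1) / (γ - 1)))) t := by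
    intro t ht
    have ht0 : (0:ℝ) < t := ht.1
    have hmem : t ∈ Set.Icc (0:ℝ) r := ⟨ht.1.le, ht.2.le⟩
    have h1 : HasDerivAt (fun s : ℝ => s ^ (γ - 1)) ((γ - 1) * t ^ (γ - 2)) t := by
      have h := Real.hasDerivAt_rpow_const (x := t) (p := γ - 1) (Or.inl ht0.ne')
      have e : γ - 1 - 1 = γ - 2 := by ring
      rwa [e] at h
    have h2 : HasDerivAt (fun s : ℝ => B₀ - s ^ (γ - 1) / (γ - 1))
        (-((γ - 1) * t ^ (γ - 2) / (γ - 1))) t := (h1.div_const (γ - 1)).const_sub B₀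
    have hγ0 : γ - 1 ≠ 0 := by linarith
    have e1 : -((γ - 1) * t ^ (γ - 2) / (γ - 1)) = -t ^ (γ - 2) := by
      rw [mul_comm, mul_div_assoc, div_self hγ0, mul_one]
    rw [e1] at h2
    have h3 := ((h2.log (hpos t hmem).ne').neg).div_const 2
    have hne : B₀ - t ^ (γ - 1) / (γ - 1) ≠ 0 := (hpos t hmem).ne'
    have keyeq : ∀ (X D : ℝ), D ≠ 0 → -(-X / D) / 2 = X / (2 * D) := by
      intro X D hD
      field_simp
    rwa [keyeq _ _ hne] at h3
  have hint : IntervalIntegrable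
      (fun t => t ^ (γ - 2) / (2 * (B₀ - t ^ (γ - 1) / (γ - 1)))) MeasureTheory.volume 0 r := by
    have h1 : IntervalIntegrable (fun t : ℝ => t ^ (γ - 2)) MeasureTheory.volume 0 r :=
      intervalIntegral.intervalIntegrable_rpow' (by linarith)
    have h2 : ContinuousOn (fun t : ℝ => (2 * (B₀ - t ^ (γ - 1) / (γ - 1)))⁻¹)
        (Set.uIcc 0 r) := by
      rw [Set.uIcc_of_le hr.le]
      apply ContinuousOn.inv₀ (continuous_const.mul hcont_inner).continuousOn
      intro t ht
      have := hpos t ht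
      exact mul_ne_zero two_ne_zero this.ne'
    have := h1.mul_continuousOn h2
    simpa [div_eq_mul_inv] using this
  have hmain := intervalIntegral.integral_eq_sub_of_hasDerivAt_of_le hr.le hFcont hderiv hint
  rw [hmain, hF]
  simp only
  rw [Real.zero_rpow (by linarith : γ - 1 ≠ 0), zero_div, sub_zero]
  ring

lemma aux_Ifun_sq (hγ1 : 1 < γ) (hγ3 : γ < 3) (hδ : 0 < δ) (hr : 0 < r)
    (hB : ∀ t ∈ Set.Icc (0:ℝ) r, δ ^ 2 / 2 ≤ B₀ - t ^ (γ - 1) / (γ - 1)) :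
    Ifun γ B₀ r ^ 2 = B₀ / (B₀ - r ^ (γ - 1) / (γ - 1)) := by
  have hδ2 : 0 < δ ^ 2 / 2 := by positivity
  have hpos : ∀ t ∈ Set.Icc (0:ℝ) r, 0 < B₀ - t ^ (γ - 1) / (γ - 1) :=
    fun t ht => lt_of_lt_of_le hδ2 (hB t ht)
  have hB0 : 0 < B₀ := by
    have h0 := hpos 0 ⟨le_refl 0, hr.le⟩
    rwa [Real.zero_rpow (by linarith : γ - 1 ≠ 0), zero_div, sub_zero] at h0
  have hrpos := hpos r ⟨hr.le, le_refl r⟩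
  rw [Ifun, aux_integral_phi hγ1 hγ3 hδ hr hB, sq, ← Real.exp_add]
  have e : (Real.log B₀ - Real.log (B₀ - r ^ (γ - 1) / (γ - 1))) / 2
        + (Real.log B₀ - Real.log (B₀ - r ^ (γ - 1) / (γ - 1))) / 2
      = Real.log B₀ - Real.log (B₀ - r ^ (γ - 1) / (γ - 1)) := by ring
  rw [e, Real.exp_sub, Real.exp_log hB0, Real.exp_log hrpos]

lemma aux_Qfun (hγ1 : 1 < γ) (hγ3 : γ < 3) (hδ : 0 < δ) (hr : 0 < r)
    (hB : ∀ t ∈ Set.Icc (0:ℝ) r, δ ^ 2 / 2 ≤ B₀ - t ^ (γ - 1) / (γ - 1)) :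
    Qfun γ B₀ r = r ^ γ / γ * (2 * B₀)⁻¹ := by
  have hδ2 : 0 < δ ^ 2 / 2 := by positivity
  have hpos : ∀ t ∈ Set.Icc (0:ℝ) r, 0 < B₀ - t ^ (γ - 1) / (γ - 1) :=
    fun t ht => lt_of_lt_of_le hδ2 (hB t ht)
  have hB0 : 0 < B₀ := by
    have h0 := hpos 0 ⟨le_refl 0, hr.le⟩
    rwa [Real.zero_rpow (by linarith : γ - 1 ≠ 0), zero_div, sub_zero] at h0
  rw [Qfun]
  have hcongr : Set.EqOn
      (fun t : ℝ => t ^ (γ - 1) * (Ifun γ B₀ t ^ 2)⁻¹ / (2 * (B₀ - t ^ (γ - 1) / (γ - 1))))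
      (fun t : ℝ => t ^ (γ - 1) * (2 * B₀)⁻¹) (Set.uIcc 0 r) := by
    intro t ht
    rw [Set.uIcc_of_le hr.le] at ht
    rcases eq_or_lt_of_le ht.1 with h0 | h0
    · simp [← h0, Real.zero_rpow (by linarith : γ - 1 ≠ 0)]
    · have hB' : ∀ s ∈ Set.Icc (0:ℝ) t, δ ^ 2 / 2 ≤ B₀ - s ^ (γ - 1) / (γ - 1) :=
        fun s hs => hB s ⟨hs.1, hs.2.trans ht.2⟩
      have hI := aux_Ifun_sq hγ1 hγ3 hδ h0 hB'
      have htpos := hpos t ht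
      simp only [hI, inv_div]
      field_simp
  rw [intervalIntegral.integral_congr hcongr, intervalIntegral.integral_mul_const,
    integral_rpow (Or.inl (by linarith : (-1:ℝ) < γ - 1))]
  have e : γ - 1 + 1 = γ := by ring
  rw [e, Real.zero_rpow (by linarith : γ ≠ 0), sub_zero]

lemma pd_congr {f g : (Fin 3 → ℝ) → ℝ} {x : Fin 3 → ℝ} (i : Fin 3)
    (h : f =ᶠ[nhds x] g) : pd i f x = pd i g x := by
  unfold pd; rw [h.fderiv_eq]

lemma pd_mul_const {f : (Fin 3 → ℝ) → ℝ} {x : Fin 3 → ℝ} (i : Fin 3)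
    (hf : DifferentiableAt ℝ f x) (k : ℝ) :
    pd i (fun y => f y * k) x = pd i f x * k := by
  unfold pd
  rw [fderiv_mul_const hf]
  simp [mul_comm]

end aux

/-- STATEMENT 12 (Theorem 3.5, momentum-type conservation laws) for the quantities
`A_i = K_i/I(ρ)`, `K₁ = G^(-1/2)`, `K₂ = β₂K₁`, `K₃ = β₃K₁`. -/
theorem new_momentum_conservation_laws
    (U : Set (Fin 3 → ℝ)) (hU : IsOpen U) (γ : ℝ) (hγ1 : 1 < γ) (hγ3 : γ < 3)
    (ρ : (Fin 3 → ℝ) → ℝ) (u : Fin 3 → (Fin 3 → ℝ) → ℝ)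
    (hρ : ContDiffOn ℝ (⊤ : ℕ∞) ρ U) (hu : ∀ i, ContDiffOn ℝ (⊤ : ℕ∞) (u i) U)
    (hρpos : ∀ x ∈ U, 0 < ρ x) (hu1pos : ∀ x ∈ U, 0 < u 0 x)
    (δ : ℝ) (hδ : 0 < δ)
    (hspeed : ∀ x ∈ U, δ ≤ Real.sqrt (u 0 x ^ 2 + u 1 x ^ 2 + u 2 x ^ 2))
    (hmass : ∀ x ∈ U,
      pd 0 (fun y => ρ y * u 0 y) x + pd 1 (fun y => ρ y * u 1 y) x
        + pd 2 (fun y => ρ y * u 2 y) x = 0)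
    (hmom : ∀ i : Fin 3, ∀ x ∈ U,
      pd 0 (fun y => ρ y * u i y * u 0 y) x + pd 1 (fun y => ρ y * u i y * u 1 y) x
        + pd 2 (fun y => ρ y * u i y * u 2 y) x + pd i (fun y => ρ y ^ γ / γ) x = 0)
    (B₀ : ℝ)
    (hBconst : ∀ x ∈ U,
      (u 0 x ^ 2 + u 1 x ^ 2 + u 2 x ^ 2) / 2 + ρ x ^ (γ - 1) / (γ - 1) = B₀)
    (β₂ β₃ G A₁ A₂ A₃ : (Fin 3 → ℝ) → ℝ)
    (hβ₂ : β₂ = fun y => u 1 y / u 0 y) (hβ₃ : β₃ = fun y => u 2 y / u 0 y)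
    (hG : G = fun y => 1 + β₂ y ^ 2 + β₃ y ^ 2)
    (hA₁ : A₁ = fun y => (Real.sqrt (G y))⁻¹ / Ifun γ B₀ (ρ y))
    (hA₂ : A₂ = fun y => β₂ y * (Real.sqrt (G y))⁻¹ / Ifun γ B₀ (ρ y))
    (hA₃ : A₃ = fun y => β₃ y * (Real.sqrt (G y))⁻¹ / Ifun γ B₀ (ρ y)) :
    ∀ x ∈ U,
      (pd 0 (fun y => ρ y * A₁ y ^ 2) x + pd 1 (fun y => ρ y * A₁ y * A₂ y) x
        + pd 2 (fun y => ρ y * A₁ y * A₃ y) x + pd 0 (fun y => Qfun γ B₀ (ρ y)) x = 0) ∧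
      (pd 0 (fun y => ρ y * A₁ y * A₂ y) x + pd 1 (fun y => ρ y * A₂ y ^ 2) x
        + pd 2 (fun y => ρ y * A₂ y * A₃ y) x + pd 1 (fun y => Qfun γ B₀ (ρ y)) x = 0) ∧
      (pd 0 (fun y => ρ y * A₁ y * A₃ y) x + pd 1 (fun y => ρ y * A₂ y * A₃ y) x
        + pd 2 (fun y => ρ y * A₃ y ^ 2) x + pd 2 (fun y => Qfun γ B₀ (ρ y)) x = 0) := by
  classical
  set c : ℝ := (Real.sqrt (2 * B₀))⁻¹ with hc
  -- pointwise identities on U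
  have key : ∀ y ∈ U, A₁ y = u 0 y * c ∧ A₂ y = u 1 y * c ∧ A₃ y = u 2 y * c ∧
      Qfun γ B₀ (ρ y) = ρ y ^ γ / γ * (2 * B₀)⁻¹ := by
    intro y hy
    have hρy := hρpos y hy
    have hu0 := hu1pos y hy
    set S : ℝ := u 0 y ^ 2 + u 1 y ^ 2 + u 2 y ^ 2 with hSdef
    have hS0 : 0 ≤ S := by positivity
    have hSδ : δ ^ 2 ≤ S := by
      have h := hspeed y hy
      nlinarith [Real.sq_sqrt hS0, Real.sqrt_nonneg S]
    have hSpos : 0 < S := lt_of_lt_of_le (by positivity) hSδ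
    have hBer : B₀ - ρ y ^ (γ - 1) / (γ - 1) = S / 2 := by
      have := hBconst y hy; linarith
    have hB : ∀ t ∈ Set.Icc (0:ℝ) (ρ y), δ ^ 2 / 2 ≤ B₀ - t ^ (γ - 1) / (γ - 1) := by
      intro t ht
      have hmono : t ^ (γ - 1) ≤ ρ y ^ (γ - 1) :=
        Real.rpow_le_rpow ht.1 ht.2 (by linarith)
      have hdiv : t ^ (γ - 1) / (γ - 1) ≤ ρ y ^ (γ - 1) / (γ - 1) :=
        (div_le_div_iff_of_pos_right (by linarith : (0:ℝ) < γ - 1)).mpr hmono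
      linarith
    have hI2 : Ifun γ B₀ (ρ y) ^ 2 = B₀ / (S / 2) := by
      rw [aux_Ifun_sq hγ1 hγ3 hδ hρy hB, hBer]
    have hB0 : 0 < B₀ := by
      have h0 := hB 0 ⟨le_refl 0, hρy.le⟩
      rw [Real.zero_rpow (by linarith : γ - 1 ≠ 0), zero_div, sub_zero] at h0
      nlinarith
    have h2B : (0:ℝ) < 2 * B₀ := by linarith
    have hIpos : 0 < Ifun γ B₀ (ρ y) := Real.exp_pos _
    have hGy : G y = S / u 0 y ^ 2 := by
      rw [hG, hβ₂, hβ₃]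
      field_simp [hSdef]
      rw [hSdef]
    have hGnn : 0 ≤ G y := by rw [hGy]; positivity
    have hcsq : c ^ 2 = (2 * B₀)⁻¹ := by
      rw [hc, inv_pow, Real.sq_sqrt h2B.le]
    have hA1 : A₁ y = u 0 y * c := by
      have hnn1 : 0 ≤ A₁ y := by
        rw [hA₁]
        exact div_nonneg (inv_nonneg.mpr (Real.sqrt_nonneg _)) hIpos.le
      have hnn2 : 0 ≤ u 0 y * c := by
        apply mul_nonneg hu0.le
        rw [hc]; positivity
      have hsq : A₁ y ^ 2 = (u 0 y * c) ^ 2 := by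
        rw [hA₁]
        simp only
        rw [div_pow, inv_pow, Real.sq_sqrt hGnn, hGy, hI2, mul_pow, hcsq]
        field_simp
      exact (sq_eq_sq₀ hnn1 hnn2).mp hsq
    have hA2 : A₂ y = u 1 y * c := by
      have : A₂ y = β₂ y * A₁ y := by
        rw [hA₂, hA₁, hβ₂]
        simp only
        ring
      rw [this, hA1, hβ₂]
      field_simp
    have hA3 : A₃ y = u 2 y * c := by
      have : A₃ y = β₃ y * A₁ y := by
        rw [hA₃, hA₁, hβ₃]
        simp only
        ring
      rw [this, hA1, hβ₃]
      field_simp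
    exact ⟨hA1, hA2, hA3, aux_Qfun hγ1 hγ3 hδ hρy hB⟩
  intro x hx
  have hUx : U ∈ nhds x := hU.mem_nhds hx
  have hdρ : DifferentiableAt ℝ ρ x := (hρ.contDiffAt hUx).differentiableAt (by simp)
  have hdu : ∀ i, DifferentiableAt ℝ (u i) x :=
    fun i => ((hu i).contDiffAt hUx).differentiableAt (by simp)
  have hmul : ∀ i j : Fin 3, DifferentiableAt ℝ (fun y => ρ y * u i y * u j y) x :=
    fun i j => (hdρ.mul (hdu i)).mul (hdu j)
  have hpow : DifferentiableAt ℝ (fun y => ρ y ^ γ / γ) x := by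
    have h1 : DifferentiableAt ℝ (fun y => ρ y ^ γ) x :=
      hdρ.rpow_const (Or.inl (hρpos x hx).ne')
    have h2 : DifferentiableAt ℝ (fun y => ρ y ^ γ * γ⁻¹) x := h1.mul_const γ⁻¹
    simpa [div_eq_mul_inv] using h2
  have hB0 : 0 < B₀ := by
    have h1 := hBconst x hx
    have hS : 0 < u 0 x ^ 2 + u 1 x ^ 2 + u 2 x ^ 2 := by
      have := hu1pos x hx; positivity
    have hh : 0 ≤ ρ x ^ (γ - 1) / (γ - 1) :=
      div_nonneg (Real.rpow_nonneg (hρpos x hx).le _) (by linarith)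
    linarith
  have h2B : (0:ℝ) < 2 * B₀ := by linarith
  have hk : c * c = (2 * B₀)⁻¹ := by
    rw [hc, ← mul_inv, Real.mul_self_sqrt h2B.le]
  have mk : ∀ (m i j : Fin 3) (F : (Fin 3 → ℝ) → ℝ),
      (∀ y ∈ U, F y = ρ y * u i y * u j y * (2 * B₀)⁻¹) →
      pd m F x = pd m (fun y => ρ y * u i y * u j y) x * (2 * B₀)⁻¹ := by
    intro m i j F hF
    rw [pd_congr m (Filter.eventuallyEq_of_mem hUx hF), pd_mul_const m (hmul i j)]
  have pQ : ∀ m : Fin 3, pd m (fun y => Qfun γ B₀ (ρ y)) x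
      = pd m (fun y => ρ y ^ γ / γ) x * (2 * B₀)⁻¹ := by
    intro m
    rw [pd_congr m (Filter.eventuallyEq_of_mem hUx (fun y hy => (key y hy).2.2.2)),
      pd_mul_const m hpow]
  refine ⟨?_, ?_, ?_⟩
  · rw [mk 0 0 0 _ (fun y hy => by
        obtain ⟨e1, e2, e3, _⟩ := key y hy; rw [e1, ← hk]; ring),
      mk 1 0 1 _ (fun y hy => by
        obtain ⟨e1, e2, e3, _⟩ := key y hy; rw [e1, e2, ← hk]; ring),
      mk 2 0 2 _ (fun y hy => by
        obtain ⟨e1, e2, e3, _⟩ := key y hy; rw [e1, e3, ← hk]; ring),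
      pQ 0]
    linear_combination (2 * B₀)⁻¹ * hmom 0 x hx
  · rw [mk 0 1 0 _ (fun y hy => by
        obtain ⟨e1, e2, e3, _⟩ := key y hy; rw [e1, e2, ← hk]; ring),
      mk 1 1 1 _ (fun y hy => by
        obtain ⟨e1, e2, e3, _⟩ := key y hy; rw [e2, ← hk]; ring),
      mk 2 1 2 _ (fun y hy => by
        obtain ⟨e1, e2, e3, _⟩ := key y hy; rw [e2, e3, ← hk]; ring),
      pQ 1]
    linear_combination (2 * B₀)⁻¹ * hmom 1 x hx
  · rw [mk 0 2 0 _ (fun y hy => by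
        obtain ⟨e1, e2, e3, _⟩ := key y hy; rw [e1, e3, ← hk]; ring),
      mk 1 2 1 _ (fun y hy => by
        obtain ⟨e1, e2, e3, _⟩ := key y hy; rw [e2, e3, ← hk]; ring),
      mk 2 2 2 _ (fun y hy => by
        obtain ⟨e1, e2, e3, _⟩ := key y hy; rw [e3, ← hk]; ring),
      pQ 2]
    linear_combination (2 * B₀)⁻¹ * hmom 2 x hx
end
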